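/- If D is a digraph missing disjoint paths, then every missing edge of D has out-degree at most 2 and in-degree at most 2 in the dependency digraph Δ(D); that is, each missing edge loses to at most 2 missing edges and at most 2 missing edges lose to it. -/

import Mathlib

namespace SSNC

variable {V : Type*}

/-- The arc relation of an oriented graph: no digons (hence irreflexive). -/
def Oriented (A : V → V → Prop) : Prop := ∀ u v, A u v → ¬ A v u

/-- `u ∈ N⁺⁺(v)`: the second out-neighborhood. -/
def SecondOut (A : V → V → Prop) (v u : V) : Prop :=
  u ≠ v ∧ ¬ A v u ∧ ∃ w, A v w ∧ A w u

/-- `{u, v}` is a missing edge of the digraph. -/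
def IsMissing (A : V → V → Prop) (u v : V) : Prop :=
  u ≠ v ∧ ¬ A u v ∧ ¬ A v u

/-- The losing relation for a fixed labeling of the two pairs: `a→x`, `b→y`,
`y ∉ N⁺(a) ∪ N⁺⁺(a)` and `x ∉ N⁺(b) ∪ N⁺⁺(b)`. -/
def LosesOrd (A : V → V → Prop) (a b x y : V) : Prop :=
  A a x ∧ A b y ∧ ¬ A a y ∧ ¬ SecondOut A a y ∧ ¬ A b x ∧ ¬ SecondOut A b x

/-- The missing edge `{a,b}` loses to the missing edge `{x,y}` (for some labeling). -/
def Loses (A : V → V → Prop) (a b x y : V) : Prop :=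
  LosesOrd A a b x y ∨ LosesOrd A a b y x

/-- Degree of a vertex in the missing graph. -/
noncomputable def mdeg (A : V → V → Prop) (v : V) : ℕ :=
  ({w | IsMissing A v w} : Set V).ncard

/-- The missing graph, as a simple graph. -/
def missingGraph (A : V → V → Prop) : SimpleGraph V where
  Adj u v := IsMissing A u v
  symm := by
    constructor
    rintro u v ⟨h1, h2, h3⟩
    exact ⟨h1.symm, h3, h2⟩
  loopless := by
    constructor
    rintro v ⟨h1, -, -⟩
    exact h1 rfl

/-- The missing graph is a vertex-disjoint union of paths
(equivalently: acyclic with maximum degree at most 2). -/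
def MissingDisjointPaths (A : V → V → Prop) : Prop :=
  (missingGraph A).IsAcyclic ∧ ∀ v, mdeg A v ≤ 2

/-- The missing graph is a vertex-disjoint union of paths on exactly 3 vertices
(equivalently: every missing edge has one endpoint of missing-degree 1 and one of
missing-degree 2). -/
def MissingPaths2 (A : V → V → Prop) : Prop :=
  ∀ u v, IsMissing A u v →
    (mdeg A u = 1 ∧ mdeg A v = 2) ∨ (mdeg A u = 2 ∧ mdeg A v = 1)

/-- The missing graph is a vertex-disjoint union of paths on 2 or 3 vertices. -/
def MissingPathsLe2 (A : V → V → Prop) : Prop :=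
  ∀ u v, IsMissing A u v →
    (mdeg A u = 1 ∧ mdeg A v = 1) ∨ (mdeg A u = 1 ∧ mdeg A v = 2) ∨
    (mdeg A u = 2 ∧ mdeg A v = 1)

/-- Out-degree of the missing edge `{u,v}` in the dependency digraph `Δ(D)`:
the number of missing edges it loses to. -/
noncomputable def outDegDelta (A : V → V → Prop) (u v : V) : ℕ :=
  ({f : Sym2 V | ∃ x y, f = s(x, y) ∧ IsMissing A x y ∧ Loses A u v x y}).ncard

/-- In-degree of the missing edge `{u,v}` in the dependency digraph `Δ(D)`:
the number of missing edges losing to it. -/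
noncomputable def inDegDelta (A : V → V → Prop) (u v : V) : ℕ :=
  ({f : Sym2 V | ∃ x y, f = s(x, y) ∧ IsMissing A x y ∧ Loses A x y u v}).ncard

/-- `C = a₁b₁c₁, …, a_k b_k c_k` is a double cycle in `Δ(D)`: pairwise vertex-disjoint
missing paths of length 2 (`k ≥ 2`), where each of `{aᵢ,bᵢ}, {bᵢ,cᵢ}` loses to each of
`{aᵢ₊₁,bᵢ₊₁}, {bᵢ₊₁,cᵢ₊₁}` (indices modulo `k`). -/
def IsDoubleCycle (A : V → V → Prop) (k : ℕ) (a b c : ZMod k → V) : Prop :=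
  2 ≤ k ∧
  (∀ i, IsMissing A (a i) (b i) ∧ IsMissing A (b i) (c i) ∧ a i ≠ c i) ∧
  (∀ i j, i ≠ j → Disjoint ({a i, b i, c i} : Set V) {a j, b j, c j}) ∧
  (∀ i, Loses A (a i) (b i) (a (i + 1)) (b (i + 1)) ∧
        Loses A (a i) (b i) (b (i + 1)) (c (i + 1)) ∧
        Loses A (b i) (c i) (a (i + 1)) (b (i + 1)) ∧
        Loses A (b i) (c i) (b (i + 1)) (c (i + 1)))

/-- `K(C)` for a double cycle `C`. -/
def Kset {k : ℕ} (a b c : ZMod k → V) : Set V :=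
  {v | ∃ i, v = a i ∨ v = b i ∨ v = c i}

/-- Out-neighborhood in the subdigraph induced on `K`. -/
def outIn (A : V → V → Prop) (K : Set V) (v : V) : Set V := {u | u ∈ K ∧ A v u}

/-- In-neighborhood in the subdigraph induced on `K`. -/
def inIn (A : V → V → Prop) (K : Set V) (v : V) : Set V := {u | u ∈ K ∧ A u v}

/-- Second out-neighborhood in the subdigraph induced on `K`. -/
def secondOutIn (A : V → V → Prop) (K : Set V) (v : V) : Set V :=
  {u | u ∈ K ∧ u ≠ v ∧ ¬ A v u ∧ ∃ w ∈ K, A v w ∧ A w u}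

/-- Second in-neighborhood in the subdigraph induced on `K`. -/
def secondInIn (A : V → V → Prop) (K : Set V) (v : V) : Set V :=
  {u | u ∈ K ∧ u ≠ v ∧ ¬ A u v ∧ ∃ w ∈ K, A u w ∧ A w v}

/-!
If `{u,v}` loses to `{p,q}` and to `{p',q'}`, labelled so that `u → p`, `v → q`, `u → p'` and
`v → q'`, then `{p,q'}` is again a missing edge: an arc `p → q'` would put `q'` in `N⁺⁺(u)`,
and an arc `q' → p` would put `p` in `N⁺⁺(v)`. So the `u`-side endpoints and the `v`-side
endpoints of the edges that `{u,v}` loses to span a complete bipartite subgraph of the missing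
graph. A forest has no 4-cycle, hence one side is a single vertex; all these edges are incident
to it, so there are at most two of them. The edges losing to `{u,v}` are handled in the same way.
-/

section

open SimpleGraph

variable {G : SimpleGraph V}

theorem _root_.SimpleGraph.IsAcyclic.eq_or_eq_of_square (hG : G.IsAcyclic) {a b c d : V}
    (hab : G.Adj a b) (hbc : G.Adj b c) (hcd : G.Adj c d) (hda : G.Adj d a) : a = c ∨ b = d := by
  by_contra! h
  have hpath : ∀ {x : V} (hax : G.Adj a x) (hxc : G.Adj x c),
      (Walk.cons hax (Walk.cons hxc .nil)).IsPath := fun hax hxc => by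
    simp [Walk.isPath_def, hax.ne, hxc.ne, h.1]
  have := (hG.subsingleton_path a c).elim ⟨_, hpath hab hbc⟩ ⟨_, hpath hda.symm hcd.symm⟩
  simp only [Subtype.mk.injEq, Walk.cons.injEq] at this
  exact h.2 this.1

theorem _root_.SimpleGraph.IsAcyclic.subsingleton_or_subsingleton_of_forall_adj
    (hG : G.IsAcyclic) {P Q : Set V} (hPQ : ∀ p ∈ P, ∀ q ∈ Q, G.Adj p q) :
    P.Subsingleton ∨ Q.Subsingleton := by
  by_contra! h
  obtain ⟨⟨a, ha, c, hc, hac⟩, ⟨b, hb, d, hd, hbd⟩⟩ := h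
  exact (hG.eq_or_eq_of_square (hPQ a ha b hb) (hPQ c hc b hb).symm (hPQ c hc d hd)
    (hPQ a ha d hd).symm).elim hac hbd

theorem _root_.SimpleGraph.ncard_incidenceSet (v : V) :
    (G.incidenceSet v).ncard = (G.neighborSet v).ncard := by
  classical
  exact Nat.card_congr (G.incidenceSetEquivNeighborSet v)

theorem _root_.SimpleGraph.IsAcyclic.ncard_le_of_forall_adj [Finite V] (hG : G.IsAcyclic) {d : ℕ}
    (hdeg : ∀ v, (G.neighborSet v).ncard ≤ d) {R : V → V → Prop}
    (hR : ∀ p q p' q', R p q → R p' q' → G.Adj p q') :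
    {e | ∃ p q, R p q ∧ e = s(p, q)}.ncard ≤ d := by
  rcases Set.eq_empty_or_nonempty {e | ∃ p q, R p q ∧ e = s(p, q)} with
    hE | ⟨_, p₀, q₀, h₀, -⟩
  · simp [hE]
  obtain ⟨v, hv⟩ : ∃ v, ∀ p q, R p q → v = p ∨ v = q := by
    rcases hG.subsingleton_or_subsingleton_of_forall_adj (P := {p | ∃ q, R p q})
      (Q := {q | ∃ p, R p q}) fun p ⟨_, hp⟩ q ⟨_, hq⟩ => hR _ _ _ _ hp hq with hP | hQ
    · exact ⟨p₀, fun p q h => .inl (hP ⟨_, h₀⟩ ⟨_, h⟩)⟩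
    · exact ⟨q₀, fun p q h => .inr (hQ ⟨_, h₀⟩ ⟨_, h⟩)⟩
  calc {e | ∃ p q, R p q ∧ e = s(p, q)}.ncard
      ≤ (G.incidenceSet v).ncard := by
        refine Set.ncard_le_ncard ?_
        rintro _ ⟨p, q, hpq, rfl⟩
        exact ⟨hR p q p q hpq hpq, by rcases hv p q hpq with rfl | rfl <;> simp⟩
    _ = (G.neighborSet v).ncard := G.ncard_incidenceSet v
    _ ≤ d := hdeg v

end

section

variable {A : V → V → Prop} {u v p q p' q' : V}

theorem IsMissing.symm (h : IsMissing A u v) : IsMissing A v u := ⟨h.1.symm, h.2.2, h.2.1⟩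

theorem LosesOrd.swap (h : LosesOrd A u v p q) : LosesOrd A v u q p :=
  ⟨h.2.1, h.1, h.2.2.2.2.1, h.2.2.2.2.2, h.2.2.1, h.2.2.2.1⟩

theorem LosesOrd.isMissing_of_same_source (huv : IsMissing A u v) (h : LosesOrd A u v p q)
    (h' : LosesOrd A u v p' q') : IsMissing A p q' := by
  obtain ⟨hup, -, -, -, hvp, hvp₂⟩ := h
  obtain ⟨-, hvq', huq', huq'₂, -, -⟩ := h'
  refine ⟨fun h => huq' (h ▸ hup), fun hpq' => huq'₂ ?_, fun hq'p => hvp₂ ?_⟩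
  · exact ⟨fun h => huv.2.2 (h ▸ hvq'), huq', p, hup, hpq'⟩
  · exact ⟨fun h => huv.2.1 (h ▸ hup), hvp, q', hvq', hq'p⟩

theorem LosesOrd.isMissing_of_same_target (hpq : IsMissing A p q) (hpq' : IsMissing A p' q')
    (h : LosesOrd A p q u v) (h' : LosesOrd A p' q' u v) : IsMissing A p q' := by
  obtain ⟨hpu, hqv, hpv, hpv₂, -, -⟩ := h
  obtain ⟨hp'u, hq'v, -, -, hq'u, hq'u₂⟩ := h'
  refine ⟨fun h => hq'u (h ▸ hpu), fun hpq' => hpv₂ ?_, fun hq'p => hq'u₂ ?_⟩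
  · exact ⟨fun h => hpq.2.2 (h ▸ hqv), hpv, q', hpq', hq'v⟩
  · exact ⟨fun h => hpq'.2.1 (h ▸ hp'u), hq'u, p, hq'p, hpu⟩

variable [Finite V]

theorem outDegDelta_le_two (hP : MissingDisjointPaths A) (huv : IsMissing A u v) :
    outDegDelta A u v ≤ 2 :=
  calc outDegDelta A u v ≤ {e | ∃ p q, LosesOrd A u v p q ∧ e = s(p, q)}.ncard := by
        refine Set.ncard_le_ncard ?_
        rintro _ ⟨x, y, rfl, -, hxy | hyx⟩
        · exact ⟨x, y, hxy, rfl⟩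
        · exact ⟨y, x, hyx, Sym2.eq_swap⟩
    _ ≤ 2 := hP.1.ncard_le_of_forall_adj hP.2 fun _ _ _ _ h h' =>
        LosesOrd.isMissing_of_same_source huv h h'

theorem inDegDelta_le_two (hP : MissingDisjointPaths A) : inDegDelta A u v ≤ 2 :=
  calc inDegDelta A u v
      ≤ {e | ∃ p q, (IsMissing A p q ∧ LosesOrd A p q u v) ∧ e = s(p, q)}.ncard := by
        refine Set.ncard_le_ncard ?_
        rintro _ ⟨x, y, rfl, hxy, hl | hl⟩
        · exact ⟨x, y, ⟨hxy, hl⟩, rfl⟩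
        · exact ⟨y, x, ⟨hxy.symm, hl.swap⟩, Sym2.eq_swap⟩
    _ ≤ 2 := hP.1.ncard_le_of_forall_adj hP.2 fun _ _ _ _ h h' =>
        LosesOrd.isMissing_of_same_target h.1 h'.1 h.2 h'.2

end

theorem stmt4_general {V : Type*} [Fintype V] (A : V → V → Prop)
    (hP : MissingDisjointPaths A) :
    ∀ u v, IsMissing A u v → outDegDelta A u v ≤ 2 ∧ inDegDelta A u v ≤ 2 :=
  fun _ _ huv => ⟨outDegDelta_le_two hP huv, inDegDelta_le_two hP⟩

/-- Proposition 4.4: in a digraph missing disjoint paths, every missing edge has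
in- and out-degree at most 2 in the dependency digraph. -/
theorem stmt4 {V : Type*} [Fintype V] (A : V → V → Prop) (hA : Oriented A)
    (hP : MissingDisjointPaths A) :
    ∀ u v, IsMissing A u v → outDegDelta A u v ≤ 2 ∧ inDegDelta A u v ≤ 2 :=
  stmt4_general A hP

end SSNC
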